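/- arXiv:1809.00254 — 5 statements merged into one kernel-verified Lean document; each statement's English description precedes it below -/
import Mathlib

section
/- Let p : ℝ → ℝ be a twice continuously differentiable 2π-periodic function satisfying p(θ) + p''(θ) ≥ 0 for all θ, and set K_p = {x ∈ ℝ² : ⟨x, u(θ)⟩ ≤ p(θ) for all θ ∈ ℝ}, where u(θ) = (cos θ, sin θ). Then K_p is a nonempty compact convex set whose support function agrees with p on the unit circle: for every θ, sup_{x ∈ K_p} ⟨x, u(θ)⟩ = p(θ). -/
open RealInnerProductSpace Real

/-- Point of `ℝ²` (with the Euclidean norm) with coordinates `a, b`. -/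
noncomputable def e2 (a b : ℝ) : EuclideanSpace ℝ (Fin 2) :=
  (WithLp.equiv 2 (Fin 2 → ℝ)).symm ![a, b]

lemma key_half (p : ℝ → ℝ) (hp : ContDiff ℝ 2 p)
    (hconv : ∀ t, 0 ≤ p t + deriv (deriv p) t) (θ φ : ℝ)
    (h1 : θ ≤ φ) (h2 : φ ≤ θ + π) :
    p θ * cos (φ - θ) + deriv p θ * sin (φ - θ) ≤ p φ := by
  have hp1 : Differentiable ℝ p := hp.differentiable (by norm_num)
  have hp' : ContDiff ℝ 1 (deriv p) := by
    have := (contDiff_succ_iff_deriv (n := 1)).mp (by exact_mod_cast hp)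
    exact this.2.2
  have hp2 : Differentiable ℝ (deriv p) := hp'.differentiable (by norm_num)
  set g : ℝ → ℝ := fun t => p t - p θ * cos (t - θ) - deriv p θ * sin (t - θ) with hg_def
  set g' : ℝ → ℝ := fun t => deriv p t + p θ * sin (t - θ) - deriv p θ * cos (t - θ) with hg'_def
  have hS : ∀ t : ℝ, HasDerivAt (fun t => sin (t - θ)) (cos (t - θ)) t := by
    intro t
    simpa [Function.comp_def] using (Real.hasDerivAt_sin (t - θ)).comp t ((hasDerivAt_id t).sub_const θ)
  have hC : ∀ t : ℝ, HasDerivAt (fun t => cos (t - θ)) (-sin (t - θ)) t := by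
    intro t
    simpa [Function.comp_def] using (Real.hasDerivAt_cos (t - θ)).comp t ((hasDerivAt_id t).sub_const θ)
  have hg : ∀ t, HasDerivAt g (g' t) t := by
    intro t
    have := ((hp1 t).hasDerivAt.sub (((hC t).const_mul (p θ)))).sub ((hS t).const_mul (deriv p θ))
    refine this.congr_deriv ?_
    ring
  have hg' : ∀ t, HasDerivAt g' (deriv (deriv p) t + p θ * cos (t - θ) + deriv p θ * sin (t - θ)) t := by
    intro t
    have := (((hp2 t).hasDerivAt).add ((hS t).const_mul (p θ))).sub ((hC t).const_mul (deriv p θ))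
    refine this.congr_deriv ?_
    ring
  -- W and its derivative
  set W : ℝ → ℝ := fun t => g' t * sin (t - θ) - g t * cos (t - θ) with hW_def
  have hW : ∀ t, HasDerivAt W ((p t + deriv (deriv p) t) * sin (t - θ)) t := by
    intro t
    have := ((hg' t).mul (hS t)).sub ((hg t).mul (hC t))
    refine this.congr_deriv ?_
    simp only [hg_def, hg'_def]
    ring
  have hWnn : ∀ t ∈ Set.Icc θ (θ + π), 0 ≤ W t := by
    have hmono : MonotoneOn W (Set.Icc θ (θ + π)) := by
      apply monotoneOn_of_deriv_nonneg (convex_Icc _ _)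
        (fun t _ => (hW t).continuousAt.continuousWithinAt)
        (fun t _ => ((hW t).differentiableAt).differentiableWithinAt)
      intro t ht
      rw [interior_Icc] at ht
      rw [(hW t).deriv]
      have hs : 0 ≤ sin (t - θ) :=
        sin_nonneg_of_nonneg_of_le_pi (by linarith [ht.1]) (by linarith [ht.2])
      exact mul_nonneg (hconv t) hs
    intro t ht
    have hWθ : W θ = 0 := by simp [hW_def, hg_def, hg'_def]
    have := hmono (Set.left_mem_Icc.mpr (by linarith [pi_pos])) ht ht.1
    linarith [this]
  -- r = g / sin(t - θ) on Ioo θ (θ+π)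
  set r : ℝ → ℝ := fun t => g t / sin (t - θ) with hr_def
  have hSpos : ∀ t ∈ Set.Ioo θ (θ + π), 0 < sin (t - θ) := fun t ht =>
    sin_pos_of_pos_of_lt_pi (by linarith [ht.1]) (by linarith [ht.2])
  have hrD : ∀ t ∈ Set.Ioo θ (θ + π), HasDerivAt r (W t / sin (t - θ) ^ 2) t := by
    intro t ht
    have := (hg t).div (hS t) (hSpos t ht).ne'
    exact this
  have hrmono : MonotoneOn r (Set.Ioo θ (θ + π)) := by
    refine monotoneOn_of_deriv_nonneg (convex_Ioo _ _)
      (fun t ht => (hrD t ht).continuousAt.continuousWithinAt) ?_ ?_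
    · intro t ht
      rw [interior_Ioo] at ht
      exact (hrD t ht).differentiableAt.differentiableWithinAt
    · intro t ht
      rw [interior_Ioo] at ht
      rw [(hrD t ht).deriv]
      exact div_nonneg (hWnn t (Set.mem_Icc_of_Ioo ht)) (sq_nonneg _)
  -- limit of r at θ from the right is 0
  have hgθ : g θ = 0 := by simp [hg_def]
  have hg'θ : g' θ = 0 := by simp [hg'_def]
  have hlim : Filter.Tendsto r (nhdsWithin θ (Set.Ioi θ)) (nhds 0) := by
    have t1 : Filter.Tendsto (slope g θ) (nhdsWithin θ {θ}ᶜ) (nhds 0) := by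
      have := hasDerivAt_iff_tendsto_slope.mp (hg θ)
      rwa [hg'θ] at this
    have t2 : Filter.Tendsto (slope (fun t => sin (t - θ)) θ) (nhdsWithin θ {θ}ᶜ) (nhds 1) := by
      have := hasDerivAt_iff_tendsto_slope.mp (hS θ)
      simpa using this
    have t3 : Filter.Tendsto (fun t => slope g θ t / slope (fun t => sin (t - θ)) θ t)
        (nhdsWithin θ {θ}ᶜ) (nhds 0) := by
      simpa [Pi.div_def] using t1.div t2 one_ne_zero
    have t4 := t3.mono_left (nhdsWithin_mono θ (fun x hx => Set.mem_compl_singleton_iff.mpr (ne_of_gt hx)))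
    refine t4.congr' ?_
    filter_upwards [self_mem_nhdsWithin] with t (ht : θ < t)
    simp only [slope_def_field, hgθ, Real.sin_zero, sub_self, sub_zero]
    have hne : t - θ ≠ 0 := sub_ne_zero.mpr (ne_of_gt ht)
    have hsne : sin (t - θ) ≠ 0 ∨ True := Or.inr trivial
    rw [div_div_div_eq]
    rw [mul_comm (g t) (t - θ), mul_div_mul_left _ _ hne]
  -- 0 ≤ g on Ioo
  have hIoo : ∀ t ∈ Set.Ioo θ (θ + π), 0 ≤ g t := by
    intro t ht
    have hr0 : 0 ≤ r t := by
      refine le_of_tendsto hlim ?_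
      have hmem : Set.Ioo θ t ∈ nhdsWithin θ (Set.Ioi θ) :=
        Ioo_mem_nhdsGT_of_mem (Set.mem_Ico.mpr ⟨le_refl θ, ht.1⟩)
      filter_upwards [hmem] with s hs
      exact hrmono (Set.mem_Ioo.mpr ⟨hs.1, lt_trans hs.2 ht.2⟩) ht (le_of_lt hs.2)
    have := mul_nonneg hr0 (le_of_lt (hSpos t ht))
    rwa [hr_def, div_mul_cancel₀ _ (hSpos t ht).ne'] at this
  -- 0 ≤ g on Icc by closure
  have hIcc : ∀ t ∈ Set.Icc θ (θ + π), 0 ≤ g t := by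
    have hcl : Set.Icc θ (θ + π) ⊆ {x | 0 ≤ g x} := by
      rw [← closure_Ioo (by linarith [pi_pos] : θ ≠ θ + π)]
      refine closure_minimal hIoo (isClosed_le continuous_const ?_)
      exact continuous_iff_continuousAt.mpr fun x => (hg x).continuousAt
    exact hcl
  have := hIcc φ (Set.mem_Icc.mpr ⟨h1, h2⟩)
  simp only [hg_def] at this
  linarith

lemma key_full (p : ℝ → ℝ) (hp : ContDiff ℝ 2 p)
    (hper : Function.Periodic p (2 * π))
    (hconv : ∀ t, 0 ≤ p t + deriv (deriv p) t) (θ φ : ℝ) :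
    p θ * cos (φ - θ) + deriv p θ * sin (φ - θ) ≤ p φ := by
  set n : ℤ := ⌊(φ - θ + π) / (2 * π)⌋ with hn
  set ψ : ℝ := φ - n * (2 * π) with hψ
  have h2π : (0:ℝ) < 2 * π := by positivity
  have hfl := Int.floor_le ((φ - θ + π) / (2 * π))
  have hfl' := Int.lt_floor_add_one ((φ - θ + π) / (2 * π))
  rw [div_lt_iff₀ h2π] at hfl'
  rw [le_div_iff₀ h2π] at hfl
  have hb1 : θ - π ≤ ψ := by rw [hψ]; push_cast at hfl ⊢; nlinarith
  have hb2 : ψ ≤ θ + π := by rw [hψ]; push_cast at hfl' ⊢; nlinarith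
  have hpψ : p ψ = p φ := hper.sub_int_mul_eq n
  have hcψ : cos (ψ - θ) = cos (φ - θ) := by
    rw [show ψ - θ = φ - θ - n * (2 * π) by rw [hψ]; ring, Real.cos_sub_int_mul_two_pi]
  have hsψ : sin (ψ - θ) = sin (φ - θ) := by
    rw [show ψ - θ = φ - θ - n * (2 * π) by rw [hψ]; ring, Real.sin_sub_int_mul_two_pi]
  rw [← hpψ, ← hcψ, ← hsψ]
  rcases le_or_gt θ ψ with hc | hc
  · exact key_half p hp hconv θ ψ hc hb2
  · -- reflect
    set q : ℝ → ℝ := fun t => p (2 * θ - t) with hq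
    have hq2 : ContDiff ℝ 2 q := hp.comp ((contDiff_const.sub contDiff_id))
    have hdq : deriv q = fun t => -deriv p (2 * θ - t) := by
      funext t
      exact deriv_comp_const_sub p (2 * θ) t
    have hddq : ∀ t, deriv (deriv q) t = deriv (deriv p) (2 * θ - t) := by
      intro t
      rw [hdq]
      rw [deriv.fun_neg]
      rw [deriv_comp_const_sub (deriv p) (2 * θ) t, neg_neg]
    have hconvq : ∀ t, 0 ≤ q t + deriv (deriv q) t := by
      intro t; rw [hddq]; exact hconv (2 * θ - t)
    have := key_half q hq2 hconvq θ (2 * θ - ψ) (by linarith) (by linarith)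
    have hqθ : q θ = p θ := by rw [hq]; norm_num; ring_nf
    have hdqθ : deriv q θ = -deriv p θ := by
      rw [hdq]; norm_num; ring_nf
    rw [hqθ, hdqθ] at this
    have h1 : (2 * θ - ψ) - θ = -(ψ - θ) := by ring
    rw [h1, Real.cos_neg, Real.sin_neg] at this
    have h2 : q (2 * θ - ψ) = p ψ := by rw [hq]; norm_num
    rw [h2] at this
    linarith

lemma e2_apply_0 (a b : ℝ) : e2 a b 0 = a := rfl
lemma e2_apply_1 (a b : ℝ) : e2 a b 1 = b := rfl

lemma inner_e2 (x : EuclideanSpace ℝ (Fin 2)) (a b : ℝ) :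
    ⟪x, e2 a b⟫ = x 0 * a + x 1 * b := by
  simp [PiLp.inner_apply, Fin.sum_univ_two, e2, RCLike.inner_apply, mul_comm]

/-- If `p` is a `2π`-periodic `C²` function with `p + p'' ≥ 0`, then
`K_p = {x : ⟪x, u θ⟫ ≤ p θ for all θ}` is a nonempty compact convex set whose
support function agrees with `p` on the unit circle. -/
theorem support_function_of_convexity_condition (p : ℝ → ℝ) (hp : ContDiff ℝ 2 p)
    (hper : Function.Periodic p (2 * π))
    (hconv : ∀ θ, 0 ≤ p θ + deriv (deriv p) θ)
    (u : ℝ → EuclideanSpace ℝ (Fin 2)) (hu : ∀ θ, u θ = e2 (cos θ) (sin θ))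
    (K : Set (EuclideanSpace ℝ (Fin 2)))
    (hK : K = {x | ∀ θ : ℝ, ⟪x, u θ⟫ ≤ p θ}) :
    K.Nonempty ∧ IsCompact K ∧ Convex ℝ K ∧
      ∀ θ : ℝ, sSup ((fun x => ⟪x, u θ⟫) '' K) = p θ := by
  -- boundary points
  set xp : ℝ → EuclideanSpace ℝ (Fin 2) := fun θ =>
    e2 (p θ * cos θ - deriv p θ * sin θ) (p θ * sin θ + deriv p θ * cos θ) with hxp
  have hinner : ∀ θ φ : ℝ, ⟪xp θ, u φ⟫ = p θ * cos (φ - θ) + deriv p θ * sin (φ - θ) := by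
    intro θ φ
    rw [hu, hxp]
    rw [inner_e2]
    simp only [e2_apply_0, e2_apply_1, Real.cos_sub, Real.sin_sub]
    ring
  have hmemx : ∀ θ : ℝ, xp θ ∈ K := by
    intro θ
    rw [hK]
    intro φ
    rw [hinner]
    exact key_full p hp hper hconv θ φ
  have hbound : ∀ x ∈ K, ∀ θ : ℝ, ⟪x, u θ⟫ ≤ p θ := by
    intro x hx; rw [hK] at hx; exact hx
  refine ⟨⟨xp 0, hmemx 0⟩, ?_, ?_, ?_⟩
  · -- compact
    have hclosed : IsClosed K := by
      have : K = ⋂ θ : ℝ, {x : EuclideanSpace ℝ (Fin 2) | ⟪x, u θ⟫ ≤ p θ} := by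
        rw [hK]; ext x; simp
      rw [this]
      exact isClosed_iInter fun θ =>
        isClosed_le (Continuous.inner continuous_id continuous_const) continuous_const
    have hbd : Bornology.IsBounded K := by
      have hsub : K ⊆ Metric.closedBall 0 (|p 0| + |p π| + (|p (π/2)| + |p (-(π/2))|)) := by
        intro x hx
        have h0 : x 0 ≤ p 0 := by
          have := hbound x hx 0; rw [hu, inner_e2] at this; simp at this; linarith
        have h1 : -x 0 ≤ p π := by
          have := hbound x hx π; rw [hu, inner_e2] at this; simp at this; linarith
        have h2 : x 1 ≤ p (π/2) := by
          have := hbound x hx (π/2); rw [hu, inner_e2] at this; simp at this; linarith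
        have h3 : -x 1 ≤ p (-(π/2)) := by
          have := hbound x hx (-(π/2)); rw [hu, inner_e2] at this; simp at this; linarith
        have hx0 : |x 0| ≤ |p 0| + |p π| := by
          rw [abs_le]; constructor
          · have := le_abs_self (p π); linarith [abs_nonneg (p 0)]
          · have := le_abs_self (p 0); linarith [abs_nonneg (p π)]
        have hx1 : |x 1| ≤ |p (π/2)| + |p (-(π/2))| := by
          rw [abs_le]; constructor
          · have := le_abs_self (p (-(π/2))); linarith [abs_nonneg (p (π/2))]
          · have := le_abs_self (p (π/2)); linarith [abs_nonneg (p (-(π/2)))]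
        rw [Metric.mem_closedBall, dist_zero_right]
        have hnorm : ‖x‖ ≤ |x 0| + |x 1| := by
          rw [EuclideanSpace.norm_eq, Fin.sum_univ_two]
          have h := Real.sqrt_le_sqrt (show ‖x 0‖^2 + ‖x 1‖^2 ≤ (|x 0| + |x 1|)^2 by
            simp only [Real.norm_eq_abs]
            nlinarith [abs_nonneg (x 0), abs_nonneg (x 1)])
          rwa [Real.sqrt_sq (by positivity)] at h
        linarith
      exact Metric.isBounded_closedBall.subset hsub
    exact Metric.isCompact_of_isClosed_isBounded hclosed hbd
  · -- convex
    rw [hK]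
    intro x hx y hy a b ha hb hab
    intro θ
    simp only [inner_add_left, real_inner_smul_left]
    have h1 := hx θ
    have h2 := hy θ
    calc a * ⟪x, u θ⟫ + b * ⟪y, u θ⟫ ≤ a * p θ + b * p θ :=
          add_le_add (mul_le_mul_of_nonneg_left h1 ha) (mul_le_mul_of_nonneg_left h2 hb)
      _ = p θ := by rw [← add_mul, hab, one_mul]
  · -- support function
    intro θ
    have hne : ((fun x => ⟪x, u θ⟫) '' K).Nonempty := ⟨_, ⟨xp θ, hmemx θ, rfl⟩⟩
    have hbdd : BddAbove ((fun x => ⟪x, u θ⟫) '' K) := by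
      refine ⟨p θ, ?_⟩
      rintro _ ⟨x, hx, rfl⟩
      exact hbound x hx θ
    apply le_antisymm
    · apply csSup_le hne
      rintro _ ⟨x, hx, rfl⟩
      exact hbound x hx θ
    · have hval : ⟪xp θ, u θ⟫ = p θ := by
        rw [hinner]; simp
      exact hval ▸ le_csSup hbdd ⟨xp θ, hmemx θ, rfl⟩
end

section
/- (Barbier) Let p : ℝ → ℝ be a twice continuously differentiable 2π-periodic function with p(θ) + p''(θ) ≥ 0 for all θ and p(θ) + p(θ + π) = w for all θ (constant width w). Then the arclength over [0, 2π] of the curve γ(θ) = (p(θ) cos θ - p'(θ) sin θ, p(θ) sin θ + p'(θ) cos θ) equals π w. -/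
open Real

lemma norm_e2 (a b : ℝ) : ‖e2 a b‖ = Real.sqrt (a ^ 2 + b ^ 2) := by
  simp [e2, EuclideanSpace.norm_eq, Fin.sum_univ_two, sq_abs]

/-- Barbier's theorem: if `p` is a `2π`-periodic `C²` function with `p + p'' ≥ 0`
and constant width `w`, i.e. `p(θ) + p(θ + π) = w` for all `θ`, then the
arclength of the boundary parametrization over `[0, 2π]` equals `π w`. -/
theorem barbier (p : ℝ → ℝ) (hp : ContDiff ℝ 2 p)
    (hper : Function.Periodic p (2 * π))
    (hconv : ∀ θ, 0 ≤ p θ + deriv (deriv p) θ)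
    (w : ℝ) (hw : ∀ θ, p θ + p (θ + π) = w)
    (γ : ℝ → EuclideanSpace ℝ (Fin 2))
    (hγ : ∀ θ, γ θ = e2 (p θ * cos θ - deriv p θ * sin θ)
                        (p θ * sin θ + deriv p θ * cos θ)) :
    ∫ θ in (0:ℝ)..(2 * π), ‖deriv γ θ‖ = π * w := by
  set q := deriv p with hq
  set r := deriv q with hr
  have h2 : ContDiff ℝ ((1:WithTop ℕ∞) + 1) p := by norm_num; exact hp
  rw [contDiff_succ_iff_deriv] at h2
  have hpd : Differentiable ℝ p := h2.1
  have hq1 : ContDiff ℝ 1 q := h2.2.2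
  have hqd : Differentiable ℝ q := hq1.differentiable one_ne_zero
  have hrc : Continuous r := (contDiff_one_iff_deriv.mp hq1).2
  -- derivative of γ
  have hderiv : ∀ θ, HasDerivAt γ (e2 (-((p θ + r θ) * sin θ)) ((p θ + r θ) * cos θ)) θ := by
    intro θ
    have hf : HasDerivAt (fun θ => p θ * cos θ - q θ * sin θ) (-((p θ + r θ) * sin θ)) θ := by
      have := ((hpd θ).hasDerivAt.mul (Real.hasDerivAt_cos θ)).sub
        ((hqd θ).hasDerivAt.mul (Real.hasDerivAt_sin θ))
      exact this.congr_deriv (by rw [hr]; ring)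
    have hg : HasDerivAt (fun θ => p θ * sin θ + q θ * cos θ) ((p θ + r θ) * cos θ) θ := by
      have := ((hpd θ).hasDerivAt.mul (Real.hasDerivAt_sin θ)).add
        ((hqd θ).hasDerivAt.mul (Real.hasDerivAt_cos θ))
      exact this.congr_deriv (by rw [hr]; ring)
    have hpi : HasDerivAt (fun θ => (![p θ * cos θ - q θ * sin θ, p θ * sin θ + q θ * cos θ] :
        Fin 2 → ℝ)) ![-((p θ + r θ) * sin θ), (p θ + r θ) * cos θ] θ := by
      rw [hasDerivAt_pi]
      intro i
      fin_cases i
      · exact hf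
      · exact hg
    have hL := ((EuclideanSpace.equiv (Fin 2) ℝ).symm.toContinuousLinearMap.hasFDerivAt
        (x := (![p θ * cos θ - q θ * sin θ, p θ * sin θ + q θ * cos θ] : Fin 2 → ℝ))).comp_hasDerivAt θ hpi
    have : γ = fun θ => (EuclideanSpace.equiv (Fin 2) ℝ).symm.toContinuousLinearMap
        (![p θ * cos θ - q θ * sin θ, p θ * sin θ + q θ * cos θ] : Fin 2 → ℝ) := by
      funext θ; rw [hγ θ]; rfl
    rw [this]
    exact hL
  -- norm of derivative
  have hnorm : ∀ θ, ‖deriv γ θ‖ = p θ + r θ := by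
    intro θ
    rw [(hderiv θ).deriv, norm_e2]
    have h1 : (-((p θ + r θ) * sin θ)) ^ 2 + ((p θ + r θ) * cos θ) ^ 2
        = (p θ + r θ) ^ 2 * (sin θ ^ 2 + cos θ ^ 2) := by ring
    rw [h1, sin_sq_add_cos_sq θ, mul_one, Real.sqrt_sq (hconv θ)]
  simp only [hnorm]
  -- split integral
  have hpc : Continuous p := hp.continuous
  have hint : (∫ θ in (0:ℝ)..(2 * π), (p θ + r θ))
      = (∫ θ in (0:ℝ)..(2 * π), p θ) + ∫ θ in (0:ℝ)..(2 * π), r θ := by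
    exact intervalIntegral.integral_add (hpc.intervalIntegrable _ _)
      (hrc.intervalIntegrable _ _)
  rw [hint]
  -- integral of r vanishes
  have hrint : (∫ θ in (0:ℝ)..(2 * π), r θ) = q (2 * π) - q 0 :=
    intervalIntegral.integral_deriv_eq_sub (fun x _ => hqd x)
      (hrc.intervalIntegrable _ _)
  have hqper : q (2 * π) = q 0 := by
    have : (fun x => p (x + 2 * π)) = p := funext fun x => hper x
    have h0 : deriv (fun x => p (x + 2 * π)) 0 = deriv p (0 + 2 * π) :=
      deriv_comp_add_const p (2 * π) 0
    rw [this] at h0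
    simpa using h0.symm
  rw [hrint, hqper, sub_self, add_zero]
  -- integral of p
  have hsplit : (∫ θ in (0:ℝ)..(2 * π), p θ)
      = (∫ θ in (0:ℝ)..π, p θ) + ∫ θ in (π:ℝ)..(2 * π), p θ := by
    rw [intervalIntegral.integral_add_adjacent_intervals
      (hpc.intervalIntegrable _ _) (hpc.intervalIntegrable _ _)]
  have hshift : (∫ θ in (π:ℝ)..(2 * π), p θ) = ∫ θ in (0:ℝ)..π, p (θ + π) := by
    rw [intervalIntegral.integral_comp_add_right]
    norm_num [two_mul]
  have hcomb := intervalIntegral.integral_add (f := p) (g := fun θ => p (θ + π))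
    (μ := MeasureTheory.volume) (a := 0) (b := π) (hpc.intervalIntegrable _ _)
    (Continuous.intervalIntegrable (by fun_prop) _ _)
  rw [hsplit, hshift, ← hcomb]
  simp only [hw]
  simp [smul_eq_mul]
end

section
/- Let w > 0 and let A, B, C ∈ ℝ² be the vertices of an equilateral triangle of side length w. Let R = B̄(A, w) ∩ B̄(B, w) ∩ B̄(C, w) be the Reuleaux triangle of width w, where B̄(x, r) denotes the closed Euclidean ball of center x and radius r. Then the two-dimensional Lebesgue measure of R equals (π - √3) w² / 2. -/
open Real Metric
open Set MeasureTheory intervalIntegral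

set_option maxHeartbeats 2000000

noncomputable def Fprim (w x : ℝ) : ℝ := (x * Real.sqrt (w^2 - x^2) + w^2 * Real.arcsin (x/w)) / 2

lemma ftc_sqrt (w : ℝ) (hw : 0 < w) {a b : ℝ} (ha : -w ≤ a) (hab : a ≤ b) (hb : b ≤ w) :
    ∫ x in a..b, Real.sqrt (w^2 - x^2) = Fprim w b - Fprim w a := by
  have hcont : Continuous fun x : ℝ => Real.sqrt (w^2 - x^2) := by
    exact (continuous_const.sub (continuous_pow 2)).sqrt
  apply integral_eq_sub_of_hasDeriv_right_of_le hab
  · apply Continuous.continuousOn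
    unfold Fprim
    exact (((continuous_id.mul hcont).add
      (continuous_const.mul (Real.continuous_arcsin.comp (continuous_id.div_const w)))).div_const 2)
  · intro x hx
    have hx1 : -w < x := lt_of_le_of_lt ha hx.1
    have hx2 : x < w := lt_of_lt_of_le hx.2 hb
    have hpos : 0 < w^2 - x^2 := by nlinarith
    set s := Real.sqrt (w^2 - x^2) with hs
    have hspos : 0 < s := Real.sqrt_pos.2 hpos
    have hssq : s^2 = w^2 - x^2 := Real.sq_sqrt hpos.le
    have h1 : HasDerivAt (fun y : ℝ => w^2 - y^2) (-(2*x)) x := by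
      simpa using (hasDerivAt_pow 2 x).const_sub (w^2)
    have h2 : HasDerivAt (fun y : ℝ => Real.sqrt (w^2 - y^2)) (1/(2*s) * (-(2*x))) x :=
      (Real.hasDerivAt_sqrt (by positivity)).comp x h1
    have h3 : HasDerivAt (fun y : ℝ => y * Real.sqrt (w^2 - y^2))
        (1 * s + x * (1/(2*s) * (-(2*x)))) x := (hasDerivAt_id x).mul h2
    have h4 : HasDerivAt (fun y : ℝ => Real.arcsin (y/w))
        (1 / Real.sqrt (1 - (x/w)^2) * (1/w)) x := by
      have hne1 : x/w ≠ -1 := by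
        intro h; rw [div_eq_iff (ne_of_gt hw)] at h; linarith [h]
      have hne2 : x/w ≠ 1 := by
        intro h; rw [div_eq_iff (ne_of_gt hw)] at h; linarith [h]
      exact (Real.hasDerivAt_arcsin hne1 hne2).comp x ((hasDerivAt_id x).div_const w)
    have hsq : Real.sqrt (1 - (x/w)^2) = s / w := by
      rw [show (1 : ℝ) - (x/w)^2 = (w^2 - x^2)/w^2 by field_simp]
      rw [Real.sqrt_div' _ (by positivity), Real.sqrt_sq hw.le]
    have := ((h3.add ((h4.const_mul (w^2)))).div_const 2)
    convert this.hasDerivWithinAt using 1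
    · rfl
    rw [hsq]
    field_simp
    linear_combination hssq
  · exact hcont.intervalIntegrable a b

lemma arcsin_half : Real.arcsin (1/2) = π/6 := by
  rw [← Real.sin_pi_div_six, Real.arcsin_sin] <;> nlinarith [Real.pi_pos]

lemma Fprim_self (w : ℝ) (hw : 0 < w) : Fprim w w = π * w^2 / 4 := by
  unfold Fprim
  rw [show w^2 - w^2 = 0 by ring, Real.sqrt_zero, div_self hw.ne', Real.arcsin_one]
  ring

lemma Fprim_neg (w x : ℝ) : Fprim w (-x) = - Fprim w x := by
  unfold Fprim
  rw [neg_div, Real.arcsin_neg, show (-x)^2 = x^2 by ring]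
  ring

lemma Fprim_half (w : ℝ) (hw : 0 < w) :
    Fprim w (w/2) = Real.sqrt 3 * w^2 / 8 + π * w^2 / 12 := by
  unfold Fprim
  have h1 : w^2 - (w/2)^2 = (Real.sqrt 3 * w / 2)^2 := by
    have := Real.sq_sqrt (by norm_num : (0:ℝ) ≤ 3)
    nlinarith [this]
  rw [h1, Real.sqrt_sq (by positivity), show w/2/w = 1/2 by field_simp, arcsin_half]
  ring

noncomputable def fl (w x : ℝ) : ℝ := Real.sqrt 3 * w / 2 - Real.sqrt (w^2 - (x - w/2)^2)
noncomputable def gu (w x : ℝ) : ℝ := min (Real.sqrt (w^2 - x^2)) (Real.sqrt (w^2 - (x-w)^2))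
def SS (w : ℝ) : Set (ℝ × ℝ) :=
  {p | p.1^2 + p.2^2 ≤ w^2 ∧ (p.1 - w)^2 + p.2^2 ≤ w^2 ∧
    (p.1 - w/2)^2 + (p.2 - Real.sqrt 3 * w/2)^2 ≤ w^2}

lemma slice_eq (w : ℝ) (hw : 0 < w) (x : ℝ) :
    {y : ℝ | (x, y) ∈ SS w} = if x ∈ Icc (0:ℝ) w then Icc (fl w x) (gu w x) else ∅ := by
  have h3 : Real.sqrt 3 ^ 2 = 3 := Real.sq_sqrt (by norm_num)
  have h3n : (0:ℝ) ≤ Real.sqrt 3 := Real.sqrt_nonneg 3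
  by_cases hx : x ∈ Icc (0:ℝ) w
  · rw [if_pos hx]
    obtain ⟨hx0, hxw⟩ := hx
    set c := Real.sqrt 3 * w / 2 with hc
    have hA : x^2 ≤ w^2 := by nlinarith
    have hB : (x - w)^2 ≤ w^2 := by nlinarith
    have hC : (x - w/2)^2 ≤ w^2 := by nlinarith
    set s := Real.sqrt (w^2 - x^2) with hs
    set sB := Real.sqrt (w^2 - (x-w)^2) with hsB
    set t := Real.sqrt (w^2 - (x - w/2)^2) with ht
    have hs0 : 0 ≤ s := Real.sqrt_nonneg _
    have hsB0 : 0 ≤ sB := Real.sqrt_nonneg _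
    have ht0 : 0 ≤ t := Real.sqrt_nonneg _
    have hssq : s^2 = w^2 - x^2 := Real.sq_sqrt (by linarith)
    have hsBsq : sB^2 = w^2 - (x-w)^2 := Real.sq_sqrt (by linarith)
    have htsq : t^2 = w^2 - (x - w/2)^2 := Real.sq_sqrt (by linarith)
    have hc0 : 0 ≤ c := by rw [hc]; positivity
    have hcsq : c^2 = 3 * w^2 / 4 := by rw [hc]; nlinarith [h3]
    clear_value c s sB t
    have hsw : s ≤ w := by nlinarith
    have htc : c ≤ t := by nlinarith
    ext y
    simp only [SS, mem_setOf_eq, mem_Icc, fl, gu, ← hc, ← hs, ← hsB, ← ht, le_min_iff]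
    constructor
    · rintro ⟨h1, h2, h3c⟩
      have k1 : Real.sqrt (y^2) ≤ s := by
        rw [hs]; exact Real.sqrt_le_sqrt (by linarith)
      have k2 : Real.sqrt (y^2) ≤ sB := by
        rw [hsB]; exact Real.sqrt_le_sqrt (by linarith)
      have k3 : Real.sqrt ((y - c)^2) ≤ t := by
        rw [ht]; exact Real.sqrt_le_sqrt (by linarith)
      rw [Real.sqrt_sq_eq_abs] at k1 k2 k3
      have ya : y ≤ |y| := le_abs_self y
      have yb : -(y - c) ≤ |y - c| := neg_le_abs _
      refine ⟨by linarith, by linarith, by linarith⟩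
    · rintro ⟨hyl, hyu1, hyu2⟩
      have kA : t ≤ c + s := by
        have h1 : w^2 - (x - w/2)^2 ≤ (c + s)^2 := by
          nlinarith [mul_nonneg hc0 hs0, hssq, hcsq, mul_nonneg (sub_nonneg.2 hxw) hw.le]
        calc t ≤ Real.sqrt ((c+s)^2) := by rw [ht]; exact Real.sqrt_le_sqrt h1
          _ = c + s := Real.sqrt_sq (by linarith)
      have kB : t ≤ c + sB := by
        have h1 : w^2 - (x - w/2)^2 ≤ (c + sB)^2 := by
          nlinarith [mul_nonneg hc0 hsB0, hsBsq, hcsq, mul_nonneg hx0 hw.le]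
        calc t ≤ Real.sqrt ((c+sB)^2) := by rw [ht]; exact Real.sqrt_le_sqrt h1
          _ = c + sB := Real.sqrt_sq (by linarith)
      have e1 : y^2 ≤ s^2 := sq_le_sq' (by linarith) hyu1
      have e2 : y^2 ≤ sB^2 := sq_le_sq' (by linarith) hyu2
      have e3 : (y - c)^2 ≤ t^2 := by
        apply sq_le_sq' (by linarith)
        have hw2c : w ≤ 2*c := by nlinarith [hcsq, hc0, hw]
        linarith
      refine ⟨by linarith, by linarith, by linarith⟩
  · rw [if_neg hx]
    ext y
    simp only [SS, mem_setOf_eq, mem_empty_iff_false, iff_false]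
    rintro ⟨h1, h2, -⟩
    rw [mem_Icc, not_and_or] at hx
    push_neg at hx
    rcases hx with hx | hx
    · nlinarith [sq_nonneg y, mul_pos (neg_pos.2 hx) hw]
    · nlinarith [sq_nonneg y, mul_pos (sub_pos.2 hx) hw]

lemma cont_fl (w : ℝ) : Continuous (fl w) := by
  unfold fl
  fun_prop

lemma cont_gu (w : ℝ) : Continuous (gu w) := by
  unfold gu
  fun_prop

lemma fl_le_gu (w : ℝ) (hw : 0 < w) {x : ℝ} (hx : x ∈ Icc (0:ℝ) w) : fl w x ≤ gu w x := by
  obtain ⟨hx0, hxw⟩ := hx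
  have h3 : Real.sqrt 3 ^ 2 = 3 := Real.sq_sqrt (by norm_num)
  have h3n : (0:ℝ) ≤ Real.sqrt 3 := Real.sqrt_nonneg 3
  have hfl : fl w x ≤ 0 := by
    unfold fl
    have h1 : (Real.sqrt 3 * w / 2)^2 ≤ w^2 - (x - w/2)^2 := by nlinarith
    have h0 : (0:ℝ) ≤ w^2 - (x - w/2)^2 := by nlinarith
    have := (Real.le_sqrt (by positivity) h0).2 h1
    linarith
  have hgu : 0 ≤ gu w x := le_min (Real.sqrt_nonneg _) (Real.sqrt_nonneg _)
  linarith

lemma meas_SS (w : ℝ) : MeasurableSet (SS w) := by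
  unfold SS
  simp only [Set.setOf_and]
  exact (measurableSet_le (by fun_prop) measurable_const).inter
    ((measurableSet_le (by fun_prop) measurable_const).inter
      (measurableSet_le (by fun_prop) measurable_const))

lemma area_SS (w : ℝ) (hw : 0 < w) :
    volume (SS w) = ENNReal.ofReal ((π - Real.sqrt 3) * w ^ 2 / 2) := by
  have h3 : Real.sqrt 3 ^ 2 = 3 := Real.sq_sqrt (by norm_num)
  rw [MeasureTheory.Measure.volume_eq_prod, Measure.prod_apply (meas_SS w)]
  have hslice : ∀ x : ℝ, volume (Prod.mk x ⁻¹' SS w)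
      = Set.indicator (Icc (0:ℝ) w) (fun x => ENNReal.ofReal (gu w x - fl w x)) x := by
    intro x
    have : Prod.mk x ⁻¹' SS w = {y : ℝ | (x, y) ∈ SS w} := rfl
    rw [this, slice_eq w hw x]
    by_cases hx : x ∈ Icc (0:ℝ) w
    · rw [if_pos hx, Set.indicator_of_mem hx, Real.volume_Icc]
    · rw [if_neg hx, Set.indicator_of_notMem hx, measure_empty]
  simp_rw [hslice]
  rw [lintegral_indicator measurableSet_Icc]
  have hInt : IntegrableOn (fun x => gu w x - fl w x) (Icc 0 w) volume :=
    ((cont_gu w).sub (cont_fl w)).integrableOn_Icc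
  rw [← ofReal_integral_eq_lintegral_ofReal hInt]
  · congr 1
    rw [MeasureTheory.integral_Icc_eq_integral_Ioc, ← intervalIntegral.integral_of_le hw.le]
    have hgu_int : IntervalIntegrable (gu w) volume 0 w := (cont_gu w).intervalIntegrable _ _
    have hfl_int : IntervalIntegrable (fl w) volume 0 w := (cont_fl w).intervalIntegrable _ _
    rw [intervalIntegral.integral_sub hgu_int hfl_int]
    -- compute ∫ fl
    have hfl_val : ∫ x in (0:ℝ)..w, fl w x
        = Real.sqrt 3 * w^2 / 2 - (2 * Fprim w (w/2)) := by
      unfold fl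
      rw [intervalIntegral.integral_sub (continuous_const.intervalIntegrable _ _)
        ((by fun_prop : Continuous fun x : ℝ => Real.sqrt (w^2 - (x - w/2)^2)).intervalIntegrable _ _)]
      have h1 : ∫ x in (0:ℝ)..w, Real.sqrt 3 * w / 2 = Real.sqrt 3 * w^2 / 2 := by
        rw [intervalIntegral.integral_const, smul_eq_mul]
        ring
      have h2 : ∫ x in (0:ℝ)..w, Real.sqrt (w^2 - (x - w/2)^2)
          = 2 * Fprim w (w/2) := by
        rw [intervalIntegral.integral_comp_sub_right (fun u => Real.sqrt (w^2 - u^2)) (w/2)]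
        rw [show (0:ℝ) - w/2 = -(w/2) by ring]
        rw [ftc_sqrt w hw (by linarith) (by linarith) (by linarith)]
        rw [Fprim_neg]
        ring
      rw [h1, h2]
    -- compute ∫ gu
    have hgu_val : ∫ x in (0:ℝ)..w, gu w x
        = 2 * (Fprim w w - Fprim w (w/2)) := by
      rw [← intervalIntegral.integral_add_adjacent_intervals
        (a := (0:ℝ)) (b := w/2) (c := w)
        ((cont_gu w).intervalIntegrable _ _) ((cont_gu w).intervalIntegrable _ _)]
      have e1 : ∫ x in (0:ℝ)..(w/2), gu w x
          = ∫ x in (0:ℝ)..(w/2), Real.sqrt (w^2 - (x-w)^2) := by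
        apply intervalIntegral.integral_congr
        intro x hx
        rw [Set.uIcc_of_le (by linarith)] at hx
        unfold gu
        rw [min_eq_right]
        apply Real.sqrt_le_sqrt
        nlinarith [hx.1, hx.2]
      have e2 : ∫ x in (w/2)..w, gu w x
          = ∫ x in (w/2)..w, Real.sqrt (w^2 - x^2) := by
        apply intervalIntegral.integral_congr
        intro x hx
        rw [Set.uIcc_of_le (by linarith)] at hx
        unfold gu
        rw [min_eq_left]
        apply Real.sqrt_le_sqrt
        nlinarith [hx.1, hx.2]
      rw [e1, e2]
      rw [intervalIntegral.integral_comp_sub_right (fun u => Real.sqrt (w^2 - u^2)) w]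
      rw [show (0:ℝ) - w = -w by ring, show w/2 - w = -(w/2) by ring]
      rw [ftc_sqrt w hw (by linarith) (by linarith) (by linarith)]
      rw [ftc_sqrt w hw (by linarith) (by linarith) (by linarith)]
      rw [Fprim_neg, Fprim_neg]
      ring
    rw [hfl_val, hgu_val, Fprim_self w hw, Fprim_half w hw]
    ring
  · filter_upwards [ae_restrict_mem measurableSet_Icc] with x hx
    simpa using sub_nonneg.2 (fl_le_gu w hw hx)

lemma le_iff_sq_le {a b : ℝ} (ha : 0 ≤ a) (hb : 0 ≤ b) : a ≤ b ↔ a^2 ≤ b^2 :=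
  ⟨fun h => by nlinarith, fun h => by nlinarith⟩

/-- The Reuleaux triangle of width `w`, i.e. the intersection of the three closed
discs of radius `w` centered at the vertices of an equilateral triangle of side
length `w`, has area `(π - √3) w² / 2`. -/
theorem reuleaux_triangle_area (w : ℝ) (hw : 0 < w)
    (A B C : EuclideanSpace ℝ (Fin 2))
    (hAB : dist A B = w) (hBC : dist B C = w) (hAC : dist A C = w)
    (R : Set (EuclideanSpace ℝ (Fin 2)))
    (hR : R = closedBall A w ∩ closedBall B w ∩ closedBall C w) :
    MeasureTheory.volume R = ENNReal.ofReal ((π - Real.sqrt 3) * w ^ 2 / 2) := by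
  have h3 : Real.sqrt 3 ^ 2 = 3 := Real.sq_sqrt (by norm_num)
  have h3n : (0:ℝ) ≤ Real.sqrt 3 := Real.sqrt_nonneg 3
  set u := B - A with hu
  set v := C - A with hv
  have hnu : ‖u‖ = w := by rw [hu, ← dist_eq_norm, dist_comm]; exact hAB
  have hnv : ‖v‖ = w := by rw [hv, ← dist_eq_norm, dist_comm]; exact hAC
  have hnuv : ‖u - v‖ = w := by
    rw [hu, hv, show B - A - (C - A) = B - C by abel, ← dist_eq_norm]; exact hBC
  have huu : (inner ℝ u u : ℝ) = w^2 := by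
    rw [real_inner_self_eq_norm_sq, hnu]
  have hvv : (inner ℝ v v : ℝ) = w^2 := by
    rw [real_inner_self_eq_norm_sq, hnv]
  have huv : (inner ℝ u v : ℝ) = w^2/2 := by
    have := norm_sub_sq_real u v
    rw [hnu, hnv, hnuv] at this
    linarith
  set c : ℝ := Real.sqrt 3 * w / 2 with hc
  have hcpos : 0 < c := by
    have : 0 < Real.sqrt 3 := Real.sqrt_pos.2 (by norm_num)
    positivity
  have hcsq : c^2 = 3*w^2/4 := by rw [hc]; nlinarith [h3]
  set e₁ : EuclideanSpace ℝ (Fin 2) := w⁻¹ • u with he1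
  set e₂ : EuclideanSpace ℝ (Fin 2) := c⁻¹ • (v - (2⁻¹ : ℝ) • u) with he2
  have i00 : (inner ℝ e₁ e₁ : ℝ) = 1 := by
    rw [he1, real_inner_smul_left, real_inner_smul_right, huu]
    field_simp
  have i01 : (inner ℝ e₁ e₂ : ℝ) = 0 := by
    simp only [he1, he2, real_inner_smul_left, real_inner_smul_right, inner_sub_right, huu, huv]
    ring
  have i10 : (inner ℝ e₂ e₁ : ℝ) = 0 := by rw [real_inner_comm]; exact i01
  have i11 : (inner ℝ e₂ e₂ : ℝ) = 1 := by
    have expand : (inner ℝ (v - (2⁻¹:ℝ) • u) (v - (2⁻¹:ℝ) • u) : ℝ) = 3*w^2/4 := by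
      simp only [inner_sub_left, inner_sub_right, real_inner_smul_left, real_inner_smul_right,
        real_inner_comm u v, huu, hvv, huv]
      ring
    rw [he2, real_inner_smul_left, real_inner_smul_right, expand]
    rw [show (c⁻¹ * (c⁻¹ * (3*w^2/4))) = (3*w^2/4) / c^2 by field_simp, hcsq]
    field_simp
  set fam : Fin 2 → EuclideanSpace ℝ (Fin 2) := ![e₁, e₂] with hfam
  have horth : Orthonormal ℝ fam := by
    rw [orthonormal_iff_ite]
    intro i j
    fin_cases i <;> fin_cases j <;>
      simp [hfam, i00, i01, i10, i11,
        show ‖e₁‖ = 1 by rw [norm_eq_sqrt_real_inner, i00, Real.sqrt_one],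
        show ‖e₂‖ = 1 by rw [norm_eq_sqrt_real_inner, i11, Real.sqrt_one]]
  have hcard : Fintype.card (Fin 2) = Module.finrank ℝ (EuclideanSpace ℝ (Fin 2)) := by
    simp
  set b₀ := basisOfOrthonormalOfCardEqFinrank horth hcard with hb₀
  have hb₀c : ⇑b₀ = fam := coe_basisOfOrthonormalOfCardEqFinrank horth hcard
  set b := b₀.toOrthonormalBasis (by rw [hb₀c]; exact horth) with hbdef
  have hb : ⇑b = fam := by rw [hbdef, Module.Basis.coe_toOrthonormalBasis, hb₀c]
  have hb0 : b 0 = e₁ := by rw [hb]; rfl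
  have hb1 : b 1 = e₂ := by rw [hb]; rfl
  have hrepr0 : ∀ y, b.repr y 0 = w⁻¹ * (inner ℝ u y : ℝ) := by
    intro y
    rw [OrthonormalBasis.repr_apply_apply, hb0, he1, real_inner_smul_left]
  have hrepr1 : ∀ y, b.repr y 1 = c⁻¹ * ((inner ℝ v y : ℝ) - 2⁻¹ * (inner ℝ u y : ℝ)) := by
    intro y
    rw [OrthonormalBasis.repr_apply_apply, hb1, he2, real_inner_smul_left, inner_sub_left,
      real_inner_smul_left]
  -- the measure preserving map
  have m1 : MeasurePreserving (fun x : EuclideanSpace ℝ (Fin 2) => x - A) volume volume :=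
    measurePreserving_sub_right volume A
  have m2 := b.measurePreserving_repr
  have m3 := EuclideanSpace.volume_preserving_symm_measurableEquiv_toLp (Fin 2)
  have m4 := MeasureTheory.volume_preserving_finTwoArrow ℝ
  set Φ : EuclideanSpace ℝ (Fin 2) → ℝ × ℝ :=
    fun x => MeasurableEquiv.finTwoArrow
      ((MeasurableEquiv.toLp 2 (Fin 2 → ℝ)).symm (b.repr (x - A))) with hΦdef
  have hΦ : MeasurePreserving Φ volume volume :=
    ((m4.comp m3).comp (m2.comp m1) : _)
  have hΦx : ∀ x, Φ x = (b.repr (x - A) 0, b.repr (x - A) 1) := fun x => rfl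
  -- set equality
  have hset : R = Φ ⁻¹' SS w := by
    ext x
    set y := x - A with hy
    have hdA : dist x A = ‖y‖ := by rw [dist_eq_norm]
    have hdB : dist x B = ‖y - u‖ := by
      rw [dist_eq_norm, hy, hu, show x - B = x - A - (B - A) by abel]
    have hdC : dist x C = ‖y - v‖ := by
      rw [dist_eq_norm, hy, hv, show x - C = x - A - (C - A) by abel]
    set s := b.repr y 0 with hsdef
    set t := b.repr y 1 with htdef
    have hsum : ‖y‖^2 = s^2 + t^2 := by
      rw [hsdef, htdef, ← b.repr.norm_map y, EuclideanSpace.norm_eq,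
        Real.sq_sqrt (by positivity)]
      simp [Fin.sum_univ_two, sq_abs]
    have hiu : (inner ℝ u y : ℝ) = w * s := by
      rw [hsdef, hrepr0]; field_simp
    have hiv : (inner ℝ v y : ℝ) = w/2 * s + c * t := by
      rw [htdef, hrepr1, hiu]; field_simp; ring
    have hnB : ‖y - u‖^2 = (s - w)^2 + t^2 := by
      rw [norm_sub_sq_real, hsum, hnu, real_inner_comm u y, hiu]; ring
    have hnC : ‖y - v‖^2 = (s - w/2)^2 + (t - c)^2 := by
      rw [norm_sub_sq_real, hsum, hnv, real_inner_comm v y, hiv]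
      nlinarith [hcsq]
    simp only [hR, mem_inter_iff, mem_closedBall, mem_preimage, hΦx, SS, mem_setOf_eq, ← hc,
      ← hsdef, ← htdef]
    rw [hdA, hdB, hdC]
    constructor
    · rintro ⟨⟨h1, h2⟩, h3c⟩
      refine ⟨?_, ?_, ?_⟩
      · rw [← hsum]; rw [le_iff_sq_le (norm_nonneg _) hw.le] at h1; exact h1
      · rw [← hnB]; rw [le_iff_sq_le (norm_nonneg _) hw.le] at h2; exact h2
      · rw [← hnC]; rw [le_iff_sq_le (norm_nonneg _) hw.le] at h3c; exact h3c
    · rintro ⟨h1, h2, h3c⟩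
      refine ⟨⟨?_, ?_⟩, ?_⟩
      · rw [le_iff_sq_le (norm_nonneg _) hw.le, hsum]; exact h1
      · rw [le_iff_sq_le (norm_nonneg _) hw.le, hnB]; exact h2
      · rw [le_iff_sq_le (norm_nonneg _) hw.le, hnC]; exact h3c
  rw [hset, hΦ.measure_preimage (meas_SS w).nullMeasurableSet, area_SS w hw]
end

section
/- (Tietze) Let S be a closed connected subset of ℝ^d such that S is locally convex at each of its points, i.e. for every x ∈ S there exists ε > 0 such that S ∩ B(x, ε) is convex, where B(x, ε) is the open ball of center x and radius ε. Then S is convex. -/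
set_option maxHeartbeats 1000000

open Metric Set Filter RealInnerProductSpace

section TietzeAux

variable {E : Type*} [NormedAddCommGroup E] [InnerProductSpace ℝ E]

/-- A polygonal chain inside `S` from `x` to `y` of total length `r`. -/
inductive SegChain (S : Set E) : E → E → ℝ → Prop
  | refl (x : E) (hx : x ∈ S) : SegChain S x x 0
  | cons (x y z : E) (r : ℝ) (hseg : segment ℝ x y ⊆ S) (h : SegChain S y z r) :
      SegChain S x z (dist x y + r)

namespace SegChain

variable {S : Set E} {x y z : E} {r s : ℝ}

theorem cast (h : SegChain S x y r) (e : r = s) : SegChain S x y s := e ▸ h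

theorem mem_left (h : SegChain S x y r) : x ∈ S := by
  cases h with
  | refl _ hx => exact hx
  | cons _ y _ _ hseg _ => exact hseg (left_mem_segment ℝ _ _)

theorem mem_right (h : SegChain S x y r) : y ∈ S := by
  induction h with
  | refl _ hx => exact hx
  | cons _ _ _ _ _ _ ih => exact ih

theorem nonneg (h : SegChain S x y r) : 0 ≤ r := by
  induction h with
  | refl => exact le_refl 0
  | cons a b _ _ _ _ ih => have := dist_nonneg (x := a) (y := b); linarith

theorem dist_le (h : SegChain S x y r) : dist x y ≤ r := by
  induction h with
  | refl => simp
  | cons a b c s _ h ih =>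
      calc dist a c ≤ dist a b + dist b c := dist_triangle a b c
      _ ≤ dist a b + s := by linarith

theorem trans (h₁ : SegChain S x y r) (h₂ : SegChain S y z s) :
    SegChain S x z (r + s) := by
  induction h₁ with
  | refl => exact h₂.cast (by ring)
  | cons a b c t hseg h ih => exact ((cons a b _ _ hseg (ih h₂)).cast (by ring))

theorem single (hseg : segment ℝ x y ⊆ S) : SegChain S x y (dist x y) :=
  (cons x y y 0 hseg (refl y (hseg (right_mem_segment ℝ x y)))).cast (add_zero _)

theorem symm (h : SegChain S x y r) : SegChain S y x r := by
  induction h with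
  | refl x hx => exact refl x hx
  | cons a b c t hseg h ih =>
      exact (ih.trans ((single (by rw [segment_symm]; exact hseg)).cast
        (dist_comm b a))).cast (by ring)

/-- A point on a segment splitting it at a prescribed distance. -/
theorem exists_split_pt (x y : E) (t : ℝ) (h0 : 0 ≤ t) (hd : t ≤ dist x y)
    (hpos : 0 < dist x y) :
    ∃ w ∈ segment ℝ x y, dist x w = t ∧ dist w y = dist x y - t := by
  refine ⟨x + (t / dist x y) • (y - x), ?_, ?_, ?_⟩
  · rw [segment_eq_image']
    exact ⟨t / dist x y, ⟨by positivity, by rw [div_le_one hpos]; exact hd⟩, rfl⟩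
  · rw [dist_eq_norm]
    have : x - (x + (t / dist x y) • (y - x)) = -((t / dist x y) • (y - x)) := by abel
    rw [this, norm_neg, norm_smul, Real.norm_eq_abs, abs_of_nonneg (by positivity),
      ← dist_eq_norm', div_mul_cancel₀]
    exact ne_of_gt hpos
  · rw [dist_eq_norm]
    have : x + (t / dist x y) • (y - x) - y = -((1 - t / dist x y) • (y - x)) := by
      rw [sub_smul, one_smul]; abel
    rw [this, norm_neg, norm_smul, Real.norm_eq_abs,
      abs_of_nonneg (by rw [sub_nonneg, div_le_one hpos]; exact hd),
      ← dist_eq_norm', sub_mul, div_mul_cancel₀ _ (ne_of_gt hpos), one_mul]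

/-- A chain can be split at any intermediate length. -/
theorem split (h : SegChain S x y r) :
    ∀ t, 0 ≤ t → t ≤ r → ∃ z, SegChain S x z t ∧ SegChain S z y (r - t) := by
  induction h with
  | refl x hx =>
      intro t h0 h1
      have : t = 0 := le_antisymm h1 h0
      subst this
      exact ⟨x, refl x hx, (refl x hx).cast (by ring)⟩
  | cons a b c s hseg h ih =>
      intro t h0 h1
      by_cases hcase : t ≤ dist a b
      · rcases eq_or_lt_of_le (dist_nonneg (x := a) (y := b)) with hd0 | hdpos
        · have ht : t = 0 := le_antisymm (by linarith) h0
          subst ht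
          exact ⟨a, refl a (hseg (left_mem_segment ℝ _ _)),
            (cons a b c s hseg h).cast (by ring)⟩
        · obtain ⟨w, hwseg, hw1, hw2⟩ := exists_split_pt a b t h0 hcase hdpos
          have hsub1 : segment ℝ a w ⊆ S :=
            fun p hp => hseg ((convex_segment a b).segment_subset
              (left_mem_segment ℝ _ _) hwseg hp)
          have hsub2 : segment ℝ w b ⊆ S :=
            fun p hp => hseg ((convex_segment a b).segment_subset
              hwseg (right_mem_segment ℝ _ _) hp)
          refine ⟨w, (single hsub1).cast hw1, ?_⟩
          exact ((cons w b c s hsub2 h).cast (by rw [hw2]; ring))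
      · push_neg at hcase
        obtain ⟨z, hz1, hz2⟩ := ih (t - dist a b) (by linarith) (by linarith)
        exact ⟨z, (cons a b z _ hseg hz1).cast (by ring), hz2.cast (by ring)⟩

end SegChain

/-- The intrinsic polygonal path pseudo-distance inside `S`. -/
noncomputable def polyDist (S : Set E) (x y : E) : ℝ := sInf {r | SegChain S x y r}

section PolyDist

variable {S : Set E} {x y z : E} {r s : ℝ}

theorem polyDist_le (h : SegChain S x y r) : polyDist S x y ≤ r :=
  csInf_le ⟨0, fun _ ht => ht.nonneg⟩ h

theorem le_polyDist (hne : ∃ r, SegChain S x y r) {c : ℝ}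
    (h : ∀ r, SegChain S x y r → c ≤ r) : c ≤ polyDist S x y :=
  le_csInf hne fun r hr => h r hr

theorem dist_le_polyDist (hne : ∃ r, SegChain S x y r) :
    dist x y ≤ polyDist S x y :=
  le_polyDist hne fun _ hr => hr.dist_le

theorem polyDist_nonneg (hne : ∃ r, SegChain S x y r) : 0 ≤ polyDist S x y :=
  le_polyDist hne fun _ hr => hr.nonneg

theorem polyDist_exists_lt (hne : ∃ r, SegChain S x y r) {c : ℝ}
    (h : polyDist S x y < c) : ∃ r, SegChain S x y r ∧ r < c := by
  obtain ⟨r, hr, hrc⟩ := exists_lt_of_csInf_lt hne h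
  exact ⟨r, hr, hrc⟩

theorem polyDist_triangle (h1 : ∃ r, SegChain S x y r) (h2 : ∃ r, SegChain S y z r) :
    polyDist S x z ≤ polyDist S x y + polyDist S y z := by
  have key : ∀ r, SegChain S x y r → polyDist S x z ≤ r + polyDist S y z := by
    intro r hr
    have : polyDist S x z - r ≤ polyDist S y z :=
      le_csInf h2 fun s hs => by have := polyDist_le (hr.trans hs); linarith
    linarith
  have : polyDist S x z - polyDist S y z ≤ polyDist S x y :=
    le_csInf h1 fun r hr => by have := key r hr; linarith
  linarith

theorem polyDist_path (hch : ∀ a ∈ S, ∀ b ∈ S, ∃ r, SegChain S a b r) (f : ℕ → E) :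
    ∀ m : ℕ, (∀ i, i ≤ m → f i ∈ S) →
      polyDist S (f 0) (f m) ≤ ∑ i ∈ Finset.range m, polyDist S (f i) (f (i + 1)) := by
  intro m
  induction m with
  | zero =>
      intro hf
      simpa using polyDist_le (SegChain.refl (f 0) (hf 0 le_rfl))
  | succ m ih =>
      intro hf
      have h1 := polyDist_triangle (x := f 0) (y := f m) (z := f (m + 1))
        (hch _ (hf 0 (by omega)) _ (hf m (by omega)))
        (hch _ (hf m (by omega)) _ (hf (m + 1) le_rfl))
      rw [Finset.sum_range_succ]
      have := ih fun i hi => hf i (by omega)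
      linarith

theorem chain_exists (hconn : IsPreconnected S) (ε : E → ℝ)
    (hε : ∀ p ∈ S, 0 < ε p) (hconv : ∀ p ∈ S, Convex ℝ (S ∩ ball p (ε p))) :
    ∀ x ∈ S, ∀ y ∈ S, ∃ r, SegChain S x y r := by
  intro x hx y hy
  by_contra hnc
  set U : Set E := {p | p ∈ S ∧ ∃ r, SegChain S x p r} with hU
  set u := ⋃ p ∈ U, ball p (ε p) with hu
  set v := ⋃ p ∈ S \ U, ball p (ε p) with hv
  have hSuv : S ⊆ u ∪ v := by
    intro p hp
    by_cases hpU : p ∈ U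
    · exact Or.inl (mem_biUnion hpU (mem_ball_self (hε p hp)))
    · exact Or.inr (mem_biUnion ⟨hp, hpU⟩ (mem_ball_self (hε p hp)))
  have h1 : (S ∩ u).Nonempty :=
    ⟨x, hx, mem_biUnion ⟨hx, 0, SegChain.refl x hx⟩ (mem_ball_self (hε x hx))⟩
  have h2 : (S ∩ v).Nonempty :=
    ⟨y, hy, mem_biUnion ⟨hy, fun hyU => hnc hyU.2⟩ (mem_ball_self (hε y hy))⟩
  obtain ⟨w, hwS, hwu, hwv⟩ := hconn u v
    (isOpen_biUnion fun _ _ => isOpen_ball) (isOpen_biUnion fun _ _ => isOpen_ball)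
    hSuv h1 h2
  obtain ⟨p₁, hp₁, hw1⟩ := mem_iUnion₂.1 hwu
  obtain ⟨p₂, hp₂, hw2⟩ := mem_iUnion₂.1 hwv
  have hseg1 : segment ℝ p₁ w ⊆ S := fun q hq =>
    ((hconv p₁ hp₁.1).segment_subset ⟨hp₁.1, mem_ball_self (hε p₁ hp₁.1)⟩
      ⟨hwS, hw1⟩ hq).1
  have hseg2 : segment ℝ w p₂ ⊆ S := fun q hq =>
    ((hconv p₂ hp₂.1).segment_subset ⟨hwS, hw2⟩
      ⟨hp₂.1, mem_ball_self (hε p₂ hp₂.1)⟩ hq).1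
  obtain ⟨r, hr⟩ := hp₁.2
  exact hp₂.2 ⟨hp₂.1, _, (hr.trans (SegChain.single hseg1)).trans (SegChain.single hseg2)⟩

/-- Strict convexity: equal-norm vectors adding to full length are equal. -/
theorem eq_of_norm_add {a b : E} {q : ℝ} (hq : 0 < q) (ha : ‖a‖ = q) (hb : ‖b‖ = q)
    (hab : ‖a + b‖ = 2 * q) : a = b := by
  have hinner : ⟪a, b⟫ = ‖a‖ * ‖b‖ := by
    have h := norm_add_sq_real a b
    rw [hab, ha, hb] at h
    rw [ha, hb]
    nlinarith
  have h2 := inner_eq_norm_mul_iff_real.1 hinner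
  rw [ha, hb] at h2
  exact smul_right_injective E (ne_of_gt hq) h2

end PolyDist

end TietzeAux

/-- Tietze's theorem: a closed connected subset of `ℝ^d` which is locally convex
at each of its points is convex. -/
theorem tietze_local_convexity (d : ℕ) (S : Set (EuclideanSpace ℝ (Fin d)))
    (hclosed : IsClosed S) (hconn : IsConnected S)
    (hloc : ∀ x ∈ S, ∃ ε > 0, Convex ℝ (S ∩ Metric.ball x ε)) :
    Convex ℝ S := by
  classical
  choose! ε hεpos hεconv using hloc
  have hch : ∀ x ∈ S, ∀ y ∈ S, ∃ r, SegChain S x y r :=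
    chain_exists hconn.isPreconnected ε hεpos hεconv
  -- Step 1: existence of midpoints for the intrinsic distance.
  have hmid : ∀ a ∈ S, ∀ b ∈ S, ∃ z ∈ S,
      polyDist S a z ≤ polyDist S a b / 2 ∧ polyDist S z b ≤ polyDist S a b / 2 := by
    intro a ha b hb
    set Db := polyDist S a b with hDb
    have hne := hch a ha b hb
    have hz : ∀ k : ℕ, ∃ z, polyDist S a z ≤ (Db + 1 / (k + 1)) / 2 ∧
        polyDist S z b ≤ (Db + 1 / (k + 1)) / 2 ∧ z ∈ S ∧ dist a z ≤ (Db + 1) / 2 := by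
      intro k
      have hpos : (0 : ℝ) < 1 / (k + 1) := by positivity
      obtain ⟨r, hr, hrlt⟩ := polyDist_exists_lt hne (by linarith : Db < Db + 1 / (k + 1))
      have hr0 := hr.nonneg
      obtain ⟨z, h1, h2⟩ := hr.split (r / 2) (by linarith) (by linarith)
      have hk1 : (1 : ℝ) / (k + 1) ≤ 1 := by
        rw [div_le_one (by positivity)]
        have : (0:ℝ) ≤ (k:ℝ) := Nat.cast_nonneg k
        linarith
      refine ⟨z, ?_, ?_, h1.mem_right, ?_⟩
      · have := polyDist_le h1; linarith
      · have := polyDist_le h2; linarith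
      · have := h1.dist_le
        have hDb0 : 0 ≤ Db := polyDist_nonneg hne
        linarith
    choose zs hz1 hz2 hz3 hz4 using hz
    have hK : IsCompact (S ∩ closedBall a ((Db + 1) / 2)) :=
      (isCompact_closedBall a _).inter_left hclosed
    have hmem : ∀ k, zs k ∈ S ∩ closedBall a ((Db + 1) / 2) := fun k =>
      ⟨hz3 k, mem_closedBall'.2 (hz4 k)⟩
    obtain ⟨z, hzmem, φ, hφ, hlim⟩ := hK.tendsto_subseq hmem
    have hzS : z ∈ S := hzmem.1
    have key : ∀ η : ℝ, 0 < η →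
        polyDist S a z ≤ Db / 2 + η ∧ polyDist S z b ≤ Db / 2 + η := by
      intro η hη
      have hεz := hεpos z hzS
      obtain ⟨N1, hN1⟩ := Metric.tendsto_atTop.1 hlim (min (η / 2) (ε z))
        (lt_min (by linarith) hεz)
      obtain ⟨M, hM⟩ := exists_nat_one_div_lt (K := ℝ) hη
      set j := max N1 M with hj
      have hd1 : dist (zs (φ j)) z < min (η / 2) (ε z) := hN1 j (le_max_left _ _)
      have hφj : (M : ℝ) ≤ (φ j : ℝ) := by
        have h1 : j ≤ φ j := hφ.le_apply
        have : M ≤ φ j := le_trans (le_max_right _ _) h1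
        exact_mod_cast this
      have hfrac : 1 / ((φ j : ℝ) + 1) < η :=
        lt_of_le_of_lt (by apply one_div_le_one_div_of_le (by positivity); linarith) hM
      have hsegz : segment ℝ (zs (φ j)) z ⊆ S := fun q hq =>
        ((hεconv z hzS).segment_subset
          ⟨hz3 _, mem_ball.2 (lt_of_lt_of_le hd1 (min_le_right _ _))⟩
          ⟨hzS, mem_ball_self hεz⟩ hq).1
      have hdz : dist (zs (φ j)) z < η / 2 := lt_of_lt_of_le hd1 (min_le_left _ _)
      have hchaz : ∃ r, SegChain S a (zs (φ j)) r := hch a ha _ (hz3 _)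
      have hchzz : ∃ r, SegChain S (zs (φ j)) z r := ⟨_, SegChain.single hsegz⟩
      constructor
      · have c1 := polyDist_triangle hchaz hchzz
        have c2 : polyDist S (zs (φ j)) z ≤ dist (zs (φ j)) z :=
          polyDist_le (SegChain.single hsegz)
        have c3 := hz1 (φ j)
        linarith
      · have c1 := polyDist_triangle (x := z) (y := zs (φ j)) (z := b)
          ⟨_, (SegChain.single hsegz).symm⟩ (hch _ (hz3 _) b hb)
        have c2 : polyDist S z (zs (φ j)) ≤ dist (zs (φ j)) z :=
          polyDist_le ((SegChain.single hsegz).symm)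
        have c3 := hz2 (φ j)
        linarith
    refine ⟨z, hzS, ?_, ?_⟩
    · exact le_of_forall_pos_le_add fun η hη => (key η hη).1
    · exact le_of_forall_pos_le_add fun η hη => (key η hη).2
  -- Step 2: dyadic subdivision chains.
  have hdy : ∀ n : ℕ, ∀ a ∈ S, ∀ b ∈ S, ∃ c : ℕ → EuclideanSpace ℝ (Fin d), c 0 = a ∧ c (2 ^ n) = b ∧
      (∀ k, k ≤ 2 ^ n → c k ∈ S) ∧
      (∀ k, k < 2 ^ n → polyDist S (c k) (c (k + 1)) ≤ polyDist S a b / 2 ^ n) := by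
    intro n
    induction n with
    | zero =>
        intro a ha b hb
        refine ⟨fun k => if k = 0 then a else b, by simp, by simp, ?_, ?_⟩
        · intro k hk
          by_cases h : k = 0 <;> simp [h, ha, hb]
        · intro k hk
          have : k = 0 := by omega
          subst this
          simp
    | succ n ih =>
        intro a ha b hb
        obtain ⟨z, hzS, hz1, hz2⟩ := hmid a ha b hb
        obtain ⟨c₁, h10, h1N, h1mem, h1d⟩ := ih a ha z hzS
        obtain ⟨c₂, h20, h2N, h2mem, h2d⟩ := ih z hzS b hb
        have h2npos : 0 < 2 ^ n := Nat.pow_pos (n := n) (by norm_num)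
        have hNN : 2 ^ (n + 1) = 2 ^ n + 2 ^ n := by ring
        refine ⟨fun k => if k ≤ 2 ^ n then c₁ k else c₂ (k - 2 ^ n), ?_, ?_, ?_, ?_⟩
        · simp [h10]
        · have h1 : ¬ (2 ^ (n + 1) ≤ 2 ^ n) := by omega
          simp only [h1, if_false]
          have : 2 ^ (n + 1) - 2 ^ n = 2 ^ n := by omega
          rw [this, h2N]
        · intro k hk
          by_cases h : k ≤ 2 ^ n
          · simp only [h, if_true]; exact h1mem k h
          · simp only [h, if_false]; exact h2mem _ (by omega)
        · intro k hk
          have hhalf : polyDist S a b / 2 / 2 ^ n = polyDist S a b / 2 ^ (n + 1) := by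
            rw [div_div, ← pow_succ']
          by_cases hk1 : k + 1 ≤ 2 ^ n
          · have hk0 : k ≤ 2 ^ n := by omega
            simp only [hk0, hk1, if_true]
            calc polyDist S (c₁ k) (c₁ (k + 1)) ≤ polyDist S a z / 2 ^ n :=
                  h1d k (by omega)
              _ ≤ polyDist S a b / 2 / 2 ^ n := by gcongr
              _ = polyDist S a b / 2 ^ (n + 1) := hhalf
          · have hck : (if k ≤ 2 ^ n then c₁ k else c₂ (k - 2 ^ n)) = c₂ (k - 2 ^ n) := by
              by_cases h : k ≤ 2 ^ n
              · have hkeq : k = 2 ^ n := by omega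
                subst hkeq
                simp [h1N, h20]
              · simp [h]
            have hck1 : ¬ (k + 1 ≤ 2 ^ n) := hk1
            simp only [hck, hck1, if_false]
            have hj : k + 1 - 2 ^ n = (k - 2 ^ n) + 1 := by omega
            rw [hj]
            calc polyDist S (c₂ (k - 2 ^ n)) (c₂ (k - 2 ^ n + 1)) ≤
                  polyDist S z b / 2 ^ n := h2d _ (by omega)
              _ ≤ polyDist S a b / 2 / 2 ^ n := by gcongr
              _ = polyDist S a b / 2 ^ (n + 1) := hhalf
  -- Step 3: conclude convexity.
  rw [convex_iff_segment_subset]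
  intro x hx y hy
  set D := polyDist S x y with hD
  have hne := hch x hx y hy
  have hD0 : 0 ≤ D := polyDist_nonneg hne
  rcases eq_or_lt_of_le hD0 with hDzero | hDpos
  · -- D = 0 forces x = y
    have h1 : dist x y ≤ D := by rw [hD]; exact dist_le_polyDist hne
    rw [← hDzero] at h1
    have : dist x y = 0 := le_antisymm h1 dist_nonneg
    have hxy : x = y := by rwa [dist_eq_zero] at this
    subst hxy
    rw [segment_same]
    exact singleton_subset_iff.2 hx
  -- uniform local convexity radius on K
  set K := S ∩ closedBall x D with hK
  have hKcomp : IsCompact K := (isCompact_closedBall x D).inter_left hclosed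
  obtain ⟨δ, hδpos, hδ⟩ : ∃ δ > 0, ∀ z ∈ K, Convex ℝ (S ∩ ball z δ) := by
    by_cases hKne : K = ∅
    · exact ⟨1, by norm_num, fun z hz => by rw [hKne] at hz; exact absurd hz (notMem_empty z)⟩
    · have hcover : K ⊆ ⋃ p : K, ball (p : _) (ε p / 2) := by
        intro q hq
        exact mem_iUnion.2 ⟨⟨q, hq⟩, mem_ball_self (half_pos (hεpos q hq.1))⟩
      obtain ⟨t, ht⟩ := hKcomp.elim_finite_subcover (fun p : K => ball (p : _) (ε p / 2))
        (fun _ => isOpen_ball) hcover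
      have htne : t.Nonempty := by
        rcases nonempty_iff_ne_empty.2 hKne with ⟨q, hq⟩
        obtain ⟨p, hp, -⟩ := mem_iUnion₂.1 (ht hq)
        exact ⟨p, hp⟩
      refine ⟨t.inf' htne (fun p => ε (p : _) / 2), ?_, ?_⟩
      · rw [gt_iff_lt, Finset.lt_inf'_iff]
        exact fun p _ => half_pos (hεpos p p.2.1)
      · intro z hz
        obtain ⟨p, hpt, hzp⟩ := mem_iUnion₂.1 (ht hz)
        have hδle : t.inf' htne (fun p => ε (p : _) / 2) ≤ ε (p : _) / 2 :=
          Finset.inf'_le _ hpt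
        have hsub : S ∩ ball z (t.inf' htne (fun p => ε (p : _) / 2)) =
            (S ∩ ball (p : _) (ε p)) ∩ ball z (t.inf' htne (fun p => ε (p : _) / 2)) := by
          ext q
          constructor
          · rintro ⟨hqS, hqz⟩
            refine ⟨⟨hqS, mem_ball.2 ?_⟩, hqz⟩
            have h1 : dist q z < ε (p : _) / 2 := lt_of_lt_of_le (mem_ball.1 hqz) hδle
            have h2 : dist z (p : _) < ε (p : _) / 2 := mem_ball.1 hzp
            calc dist q (p : _) ≤ dist q z + dist z (p : _) := dist_triangle _ _ _
              _ < ε (p : _) := by linarith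
          · rintro ⟨⟨hqS, -⟩, hqz⟩
            exact ⟨hqS, hqz⟩
        rw [hsub]
        exact (hεconv p p.2.1).inter (convex_ball z _)
  -- choose the dyadic level
  obtain ⟨n, hn⟩ : ∃ n : ℕ, 2 * D / δ < 2 ^ n := pow_unbounded_of_one_lt _ one_lt_two
  have h2pow : (0 : ℝ) < 2 ^ n := by positivity
  set q : ℝ := D / 2 ^ n with hq
  have hqpos : 0 < q := div_pos hDpos h2pow
  have h2q : 2 * q < δ := by
    rw [div_lt_iff₀ hδpos] at hn
    have h1 : 2 * D < δ * 2 ^ n := by linarith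
    have : 2 * q = 2 * D / 2 ^ n := by rw [hq]; ring
    rw [this, div_lt_iff₀ h2pow]
    linarith
  have hqδ : q < δ := by linarith
  obtain ⟨c, hc0, hcN, hcmem, hcd⟩ := hdy n x hx y hy
  set N : ℕ := 2 ^ n with hNdef
  have hNcast : ((N : ℕ) : ℝ) = 2 ^ n := by push_cast [hNdef]; ring
  have hNq : (N : ℝ) * q = D := by rw [hNcast, hq]; field_simp
  -- distances between consecutive points
  have hpd : ∀ k, k < N → polyDist S (c k) (c (k + 1)) ≤ q := fun k hk => hcd k hk
  have hdistc : ∀ k, k < N → dist (c k) (c (k + 1)) ≤ q := by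
    intro k hk
    exact le_trans (dist_le_polyDist (hch _ (hcmem k (by omega)) _ (hcmem (k + 1) (by omega))))
      (hpd k hk)
  -- the points lie in K
  have hdistx : ∀ k, k ≤ N → dist x (c k) ≤ (k : ℝ) * q := by
    intro k
    induction k with
    | zero => intro _; simp [hc0]
    | succ k ih =>
        intro hk
        have h1 := ih (by omega)
        have h2 := hdistc k (by omega)
        calc dist x (c (k + 1)) ≤ dist x (c k) + dist (c k) (c (k + 1)) :=
              dist_triangle _ _ _
          _ ≤ (k : ℝ) * q + q := by linarith
          _ = ((k + 1 : ℕ) : ℝ) * q := by push_cast; ring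
  have hmemK : ∀ k, k ≤ N → c k ∈ K := by
    intro k hk
    refine ⟨hcmem k hk, mem_closedBall'.2 ?_⟩
    calc dist x (c k) ≤ (k : ℝ) * q := hdistx k hk
      _ ≤ (N : ℝ) * q := by
          have : (k : ℝ) ≤ (N : ℝ) := by exact_mod_cast hk
          nlinarith
      _ = D := hNq
  -- consecutive segments are in S
  have hseg : ∀ k, k < N → segment ℝ (c k) (c (k + 1)) ⊆ S := by
    intro k hk
    intro p hp
    refine ((hδ (c k) (hmemK k (by omega))).segment_subset
      ⟨hcmem k (by omega), mem_ball_self hδpos⟩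
      ⟨hcmem (k + 1) (by omega), mem_ball.2 ?_⟩ hp).1
    rw [dist_comm]
    exact lt_of_le_of_lt (hdistc k hk) (by linarith)
  -- all steps are equal vectors
  have hvec : ∀ k, 1 ≤ k → k < N → c (k + 1) - c k = c k - c (k - 1) := by
    intro k hk1 hkN
    have e1 : dist (c (k - 1)) (c k) ≤ q := by
      have := hdistc (k - 1) (by omega)
      have hkk : k - 1 + 1 = k := by omega
      rwa [hkk] at this
    have e2 : dist (c k) (c (k + 1)) ≤ q := hdistc k hkN
    have htri : dist (c (k - 1)) (c (k + 1)) ≤ dist (c (k - 1)) (c k) + dist (c k) (c (k + 1)) :=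
      dist_triangle _ _ _
    -- segment between c (k-1) and c (k+1) is in S
    have hseg13 : segment ℝ (c (k - 1)) (c (k + 1)) ⊆ S := by
      intro p hp
      refine ((hδ (c (k - 1)) (hmemK (k - 1) (by omega))).segment_subset
        ⟨hcmem (k - 1) (by omega), mem_ball_self hδpos⟩
        ⟨hcmem (k + 1) (by omega), mem_ball.2 ?_⟩ hp).1
      rw [dist_comm]
      linarith
    have hp13 : polyDist S (c (k - 1)) (c (k + 1)) ≤ dist (c (k - 1)) (c (k + 1)) :=
      polyDist_le (SegChain.single hseg13)
    -- lower bound via the global distance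
    have hpath1 : polyDist S x (c (k - 1)) ≤ ((k - 1 : ℕ) : ℝ) * q := by
      have h := polyDist_path hch c (k - 1) (fun i hi => hcmem i (by omega))
      rw [hc0] at h
      refine le_trans h (le_trans (Finset.sum_le_sum
        (fun i hi => hpd i (by have := Finset.mem_range.1 hi; omega))) ?_)
      rw [Finset.sum_const, Finset.card_range, nsmul_eq_mul]
    have hpath2 : polyDist S (c (k + 1)) y ≤ ((N - k - 1 : ℕ) : ℝ) * q := by
      have h := polyDist_path hch (fun i => c (k + 1 + i)) (N - k - 1)
        (fun i hi => hcmem _ (by omega))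
      have hNk : k + 1 + (N - k - 1) = N := by omega
      simp only [hNk, hcN] at h
      have hsum : ∑ i ∈ Finset.range (N - k - 1),
          polyDist S (c (k + 1 + i)) (c (k + 1 + (i + 1))) ≤
          ∑ _i ∈ Finset.range (N - k - 1), q :=
        Finset.sum_le_sum (fun i hi =>
          hpd (k + 1 + i) (by have := Finset.mem_range.1 hi; omega))
      rw [Finset.sum_const, Finset.card_range, nsmul_eq_mul] at hsum
      exact le_trans h hsum
    have hDle : D ≤ polyDist S x (c (k - 1)) + polyDist S (c (k - 1)) (c (k + 1)) +
        polyDist S (c (k + 1)) y := by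
      have t1 := polyDist_triangle (x := x) (y := c (k - 1)) (z := c (k + 1))
        (hch _ hx _ (hcmem _ (by omega))) (hch _ (hcmem _ (by omega)) _ (hcmem _ (by omega)))
      have t2 := polyDist_triangle (x := x) (y := c (k + 1)) (z := y)
        (hch _ hx _ (hcmem _ (by omega))) (hch _ (hcmem _ (by omega)) _ hy)
      rw [← hD] at t2
      linarith
    have hsumcast : ((k - 1 : ℕ) : ℝ) + ((N - k - 1 : ℕ) : ℝ) = (N : ℝ) - 2 := by
      have h1 : (k - 1 : ℕ) + (N - k - 1 : ℕ) + 2 = N := by omega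
      have h2 := congrArg (fun m : ℕ => (m : ℝ)) h1
      push_cast at h2
      linarith
    have hlow : 2 * q ≤ dist (c (k - 1)) (c (k + 1)) := by
      have hmul : ((k - 1 : ℕ) : ℝ) * q + ((N - k - 1 : ℕ) : ℝ) * q = ((N : ℝ) - 2) * q := by
        rw [← add_mul, hsumcast]
      nlinarith [hNq]
    -- now derive the vector equality
    have hna : ‖c k - c (k - 1)‖ = dist (c (k - 1)) (c k) := (dist_eq_norm' _ _).symm
    have hnb : ‖c (k + 1) - c k‖ = dist (c k) (c (k + 1)) := (dist_eq_norm' _ _).symm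
    have hnab : (c k - c (k - 1)) + (c (k + 1) - c k) = c (k + 1) - c (k - 1) := by abel
    have hnabn : ‖(c k - c (k - 1)) + (c (k + 1) - c k)‖ = dist (c (k - 1)) (c (k + 1)) := by
      rw [hnab]; exact (dist_eq_norm' _ _).symm
    have hub : ‖(c k - c (k - 1)) + (c (k + 1) - c k)‖ ≤
        ‖c k - c (k - 1)‖ + ‖c (k + 1) - c k‖ := norm_add_le _ _
    have hea : ‖c k - c (k - 1)‖ = q := by rw [hna]; rw [hna, hnb, hnabn] at hub; linarith
    have heb : ‖c (k + 1) - c k‖ = q := by rw [hnb]; rw [hna, hnb, hnabn] at hub; linarith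
    have heab : ‖(c k - c (k - 1)) + (c (k + 1) - c k)‖ = 2 * q := by
      rw [hnabn]; rw [hna, hnb, hnabn] at hub; linarith
    exact (eq_of_norm_add hqpos hea heb (by rw [add_comm] at heab ⊢; exact heab)).symm
  -- hence all steps equal the first one
  have hv : ∀ k, k < N → c (k + 1) - c k = c 1 - c 0 := by
    intro k
    induction k with
    | zero => intro _; rfl
    | succ k ih =>
        intro hk
        have h1 := hvec (k + 1) (by omega) hk
        have h2 : k + 1 - 1 = k := by omega
        rw [h2] at h1
        rw [h1]
        exact ih (by omega)
  set v := c 1 - c 0 with hvdef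
  have hcoord : ∀ k, k ≤ N → c k = x + (k : ℝ) • v := by
    intro k
    induction k with
    | zero => intro _; simp [hc0]
    | succ k ih =>
        intro hk
        have h1 := ih (by omega)
        have h2 := hv k (by omega)
        have : c (k + 1) = c k + v := by
          rw [← h2]; abel
        rw [this, h1]
        push_cast
        rw [add_smul, one_smul]
        abel
  have hyv : y = x + (N : ℝ) • v := by rw [← hcN]; exact hcoord N le_rfl
  -- finish: every point of the segment lies in S
  intro p hp
  rw [segment_eq_image'] at hp
  obtain ⟨θ, ⟨hθ0, hθ1⟩, hpeq⟩ := hp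
  have hyx : y - x = (N : ℝ) • v := by rw [hyv]; abel
  have hpv : p = x + (θ * (N : ℝ)) • v := by
    rw [← hpeq]
    show x + θ • (y - x) = _
    rw [hyx, smul_smul]
  set u : ℝ := θ * (N : ℝ) with hu
  have hu0 : 0 ≤ u := mul_nonneg hθ0 (Nat.cast_nonneg N)
  have huN : u ≤ (N : ℝ) := by
    have : (0:ℝ) ≤ (N : ℝ) := Nat.cast_nonneg N
    nlinarith
  set k : ℕ := ⌊u⌋₊ with hk
  have hkle : (k : ℝ) ≤ u := Nat.floor_le hu0
  by_cases hkN : N ≤ k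
  · -- then u = N and p = y
    have h1 : (N : ℝ) ≤ (k : ℝ) := by exact_mod_cast hkN
    have hueq : u = (N : ℝ) := le_antisymm huN (le_trans h1 hkle)
    have : p = y := by rw [hpv, hueq, ← hyv]
    rw [this]; exact hy
  · push_neg at hkN
    have hku : u < (k : ℝ) + 1 := Nat.lt_floor_add_one u
    have hs0 : 0 ≤ u - (k : ℝ) := by linarith
    have hs1 : u - (k : ℝ) ≤ 1 := by linarith
    have hck1 : c (k + 1) - c k = v := hv k hkN
    have hpmem : p ∈ segment ℝ (c k) (c (k + 1)) := by
      rw [segment_eq_image']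
      refine ⟨u - (k : ℝ), ⟨hs0, hs1⟩, ?_⟩
      show c k + (u - (k : ℝ)) • (c (k + 1) - c k) = p
      rw [hck1, hcoord k (by omega), hpv]
      rw [add_assoc, ← add_smul]
      have harith : (k : ℝ) + (u - (k : ℝ)) = u := by ring
      rw [harith]
    exact hseg k hkN hpmem
end

section
/- (Pál completion) Let K be a nonempty compact convex subset of ℝ^d with diameter w > 0. Then there exists a compact convex set W ⊆ ℝ^d with K ⊆ W such that W has constant width w, that is, its support function p_W satisfies p_W(θ) + p_W(-θ) = w for every unit vector θ ∈ 𝕊^{d-1}. -/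
open RealInnerProductSpace

set_option maxHeartbeats 1000000 in
/-- Key lemma: if `W` has pairwise distances `≤ w`, is "complete" (any point within
distance `w` of all of `W` belongs to `W`), and `y` maximizes `⟪θ, ·⟫` on `W` for a
unit vector `θ`, then `y - w • θ ∈ W`. -/
lemma pal_key {E : Type*} [NormedAddCommGroup E] [InnerProductSpace ℝ E]
    (w : ℝ) (hw : 0 < w) (W : Set E)
    (hdist : ∀ x ∈ W, ∀ y ∈ W, dist x y ≤ w)
    (hcompl : ∀ p : E, (∀ x ∈ W, dist p x ≤ w) → p ∈ W)
    (θ : E) (hθ : ‖θ‖ = 1) (y : E) (hy : y ∈ W)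
    (hmax : ∀ x ∈ W, ⟪θ, x⟫ ≤ ⟪θ, y⟫) :
    y - w • θ ∈ W := by
  apply hcompl
  intro z hz
  by_contra hzc
  push_neg at hzc
  have hL_le : ‖y - z‖ ≤ w := by
    have h := hdist y hy z hz; rwa [dist_eq_norm] at h
  set L : ℝ := ‖y - z‖ with hLdef
  have hs0 : 0 ≤ ⟪θ, y - z⟫ := by
    have h := hmax z hz
    rw [inner_sub_right]; linarith
  set s : ℝ := ⟪θ, y - z⟫ with hsdef
  have hkey : 2 * w * s < L ^ 2 := by
    have h1 : w < ‖(y - z) - w • θ‖ := by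
      rw [dist_eq_norm] at hzc
      have e : y - w • θ - z = (y - z) - w • θ := by abel
      rwa [e] at hzc
    have h2 : ‖(y - z) - w • θ‖ ^ 2 = L ^ 2 - 2 * w * s + w ^ 2 := by
      rw [norm_sub_sq_real, real_inner_smul_right, norm_smul, hθ, Real.norm_eq_abs,
        abs_of_pos hw, real_inner_comm θ (y - z), ← hsdef, ← hLdef]
      ring
    nlinarith [norm_nonneg ((y - z) - w • θ)]
  have hL0 : 0 < L := by
    have h0 : 0 ≤ 2 * w * s := mul_nonneg (by positivity) hs0
    have := norm_nonneg (y - z)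
    nlinarith
  set β : ℝ := (2 * w * s + L ^ 2) / 4 with hβdef
  have hβ0 : 0 ≤ β := by
    have h0 : 0 ≤ 2 * w * s := mul_nonneg (by positivity) hs0
    rw [hβdef]; nlinarith [sq_nonneg L]
  have hβ1 : 0 < β - w * s := by rw [hβdef]; nlinarith
  have hβ2 : 0 < w * L ^ 2 - 2 * β * w := by rw [hβdef]; nlinarith
  set D : E := w • (z - y) + β • θ with hDdef
  have hθD : ⟪θ, D⟫ = β - w * s := by
    rw [hDdef, inner_add_right, real_inner_smul_right, real_inner_smul_right,
      real_inner_self_eq_norm_sq, hθ]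
    have e : ⟪θ, z - y⟫ = -s := by
      rw [hsdef, ← inner_neg_right]
      congr 1
      abel
    rw [e]; ring
  set δ : ℝ := min (1 / w) ((w * L ^ 2 - 2 * β * w) / (‖D‖ ^ 2 + 1)) with hδdef
  have hδ0 : 0 < δ := lt_min (by positivity) (by positivity)
  have hδw : δ * w ≤ 1 := by
    have h : δ ≤ 1 / w := by
      rw [hδdef]; exact min_le_left _ _
    calc δ * w ≤ (1 / w) * w := mul_le_mul_of_nonneg_right h hw.le
      _ = 1 := by field_simp
  have hδD : δ * (‖D‖ ^ 2 + 1) ≤ w * L ^ 2 - 2 * β * w := by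
    have h := min_le_right (1 / w) ((w * L ^ 2 - 2 * β * w) / (‖D‖ ^ 2 + 1))
    rw [← hδdef] at h
    have hpos : (0:ℝ) < ‖D‖ ^ 2 + 1 := by positivity
    calc δ * (‖D‖ ^ 2 + 1)
        ≤ ((w * L ^ 2 - 2 * β * w) / (‖D‖ ^ 2 + 1)) * (‖D‖ ^ 2 + 1) :=
          mul_le_mul_of_nonneg_right h hpos.le
      _ = w * L ^ 2 - 2 * β * w := by field_simp
  have hpW : y + δ • D ∈ W := by
    apply hcompl
    intro x hx
    have hr_le : ‖x - y‖ ≤ w := by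
      have h := hdist x hx y hy
      rwa [dist_eq_norm] at h
    have hr0 : (0:ℝ) ≤ ‖x - y‖ := norm_nonneg _
    set r : ℝ := ‖x - y‖ with hrdef
    have hA : ⟪y - z, x - y⟫ ≤ (w ^ 2 - r ^ 2 - L ^ 2) / 2 := by
      have h3 : ‖x - z‖ ≤ w := by
        have h := hdist x hx z hz; rwa [dist_eq_norm] at h
      have h4 : ‖x - z‖ ^ 2 = r ^ 2 + 2 * ⟪y - z, x - y⟫ + L ^ 2 := by
        have e : x - z = (x - y) + (y - z) := by abel
        rw [e, norm_add_sq_real, real_inner_comm (y - z) (x - y), ← hrdef, ← hLdef]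
      nlinarith [norm_nonneg (x - z)]
    have hB : -r ≤ ⟪θ, x - y⟫ := by
      have h := abs_real_inner_le_norm θ (x - y)
      rw [hθ, one_mul] at h
      linarith [(abs_le.mp h).1]
    have hDx : w * (r ^ 2 + L ^ 2 - w ^ 2) / 2 - β * r ≤ ⟪D, x - y⟫ := by
      rw [hDdef, inner_add_left, real_inner_smul_left, real_inner_smul_left]
      have e : ⟪z - y, x - y⟫ = -⟪y - z, x - y⟫ := by
        rw [← inner_neg_left]
        congr 1
        abel
      rw [e]
      nlinarith [mul_le_mul_of_nonneg_left hA hw.le, mul_le_mul_of_nonneg_left hB hβ0]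
    have hpx : ‖(y + δ • D) - x‖ ^ 2 = δ ^ 2 * ‖D‖ ^ 2 - 2 * δ * ⟪D, x - y⟫ + r ^ 2 := by
      have e : (y + δ • D) - x = δ • D - (x - y) := by abel
      rw [e, norm_sub_sq_real, real_inner_smul_left, norm_smul, Real.norm_eq_abs,
        abs_of_pos hδ0]
      ring
    have hsq : ‖(y + δ • D) - x‖ ^ 2 ≤ w ^ 2 := by
      rw [hpx]
      nlinarith [mul_le_mul_of_nonneg_left hDx hδ0.le,
        mul_nonneg (mul_nonneg hδ0.le hβ0) (sub_nonneg.mpr hr_le),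
        mul_nonneg (sub_nonneg.mpr hδw) (mul_nonneg (sub_nonneg.mpr hr_le) (by linarith : (0:ℝ) ≤ w + r)),
        mul_le_mul_of_nonneg_left hδD hδ0.le, sq_nonneg δ]
    rw [dist_eq_norm]
    nlinarith [norm_nonneg ((y + δ • D) - x), hsq, hw]
  have h := hmax _ hpW
  rw [inner_add_right, real_inner_smul_right, hθD] at h
  nlinarith [mul_pos hδ0 hβ1]

set_option maxHeartbeats 1000000 in
/-- Pál's completion theorem: every nonempty compact convex set `K ⊆ ℝ^d` of
diameter `w > 0` is contained in a compact convex set `W` of constant width `w`,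
i.e. whose support function `p_W` satisfies `p_W θ + p_W (-θ) = w` for every
unit vector `θ`. -/
theorem pal_completion (d : ℕ) (K : Set (EuclideanSpace ℝ (Fin d)))
    (hne : K.Nonempty) (hcomp : IsCompact K) (hconv : Convex ℝ K)
    (w : ℝ) (hw : 0 < w) (hdiam : Metric.diam K = w) :
    ∃ W : Set (EuclideanSpace ℝ (Fin d)), K ⊆ W ∧ IsCompact W ∧ Convex ℝ W ∧
      ∀ θ ∈ Metric.sphere (0 : EuclideanSpace ℝ (Fin d)) 1,
        sSup ((fun x => ⟪θ, x⟫) '' W) + sSup ((fun x => ⟪-θ, x⟫) '' W) = w := by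
  classical
  obtain ⟨W, hKW, hWmaximal⟩ :=
    zorn_subset_nonempty
      {S : Set (EuclideanSpace ℝ (Fin d)) | K ⊆ S ∧ ∀ x ∈ S, ∀ y ∈ S, dist x y ≤ w}
      (fun c hc hchain hcne => by
        obtain ⟨t, ht⟩ := hcne
        refine ⟨⋃₀ c, ⟨(hc ht).1.trans (Set.subset_sUnion_of_mem ht), ?_⟩,
          fun s hs => Set.subset_sUnion_of_mem hs⟩
        rintro x ⟨t1, ht1, hx⟩ y ⟨t2, ht2, hy⟩
        rcases hchain.total ht1 ht2 with h | h
        · exact (hc ht2).2 x (h hx) y hy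
        · exact (hc ht1).2 x hx y (h hy))
      K ⟨Set.Subset.rfl, fun x hx y hy => by
        rw [← hdiam]; exact Metric.dist_le_diam_of_mem hcomp.isBounded hx hy⟩
  obtain ⟨hKW', hWdist⟩ := hWmaximal.prop
  have hcompl : ∀ p, (∀ x ∈ W, dist p x ≤ w) → p ∈ W := by
    intro p hp
    have hmem : insert p W ∈
        {S : Set (EuclideanSpace ℝ (Fin d)) | K ⊆ S ∧ ∀ x ∈ S, ∀ y ∈ S, dist x y ≤ w} := by
      refine ⟨hKW'.trans (Set.subset_insert _ _), ?_⟩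
      rintro x (rfl | hx) y (rfl | hy)
      · simpa using hw.le
      · exact hp y hy
      · rw [dist_comm]; exact hp x hx
      · exact hWdist x hx y hy
    exact hWmaximal.2 hmem (Set.subset_insert _ _) (Set.mem_insert _ _)
  have hWne : W.Nonempty := hne.mono hKW'
  have hWeq : W = ⋂ x ∈ W, Metric.closedBall x w := by
    apply Set.Subset.antisymm
    · intro p hp
      exact Set.mem_biInter fun x hx => Metric.mem_closedBall.mpr (hWdist p hp x hx)
    · intro p hp
      exact hcompl p fun x hx => Metric.mem_closedBall.mp (Set.mem_iInter₂.mp hp x hx)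
  have hWconv : Convex ℝ W := by
    rw [hWeq]
    exact convex_iInter fun x => convex_iInter fun _ => convex_closedBall x w
  have hWclosed : IsClosed W := by
    rw [hWeq]
    exact isClosed_biInter fun x _ => Metric.isClosed_closedBall
  have hWbdd : Bornology.IsBounded W := by
    obtain ⟨x₀, hx₀⟩ := hWne
    have : W ⊆ Metric.closedBall x₀ w := fun x hx =>
      Metric.mem_closedBall.mpr (hWdist x hx x₀ hx₀)
    exact Metric.isBounded_closedBall.subset this
  have hWcomp : IsCompact W := Metric.isCompact_of_isClosed_isBounded hWclosed hWbdd
  refine ⟨W, hKW, hWcomp, hWconv, ?_⟩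
  intro θ hθ
  have hθn : ‖θ‖ = 1 := by rwa [mem_sphere_zero_iff_norm] at hθ
  have hcont1 : Continuous fun x : EuclideanSpace ℝ (Fin d) => ⟪θ, x⟫ :=
    continuous_const.inner continuous_id
  have hcont2 : Continuous fun x : EuclideanSpace ℝ (Fin d) => ⟪-θ, x⟫ :=
    continuous_const.inner continuous_id
  obtain ⟨y₁, hy₁, hmax₁⟩ := hWcomp.exists_isMaxOn hWne hcont1.continuousOn
  obtain ⟨y₂, hy₂, hmax₂⟩ := hWcomp.exists_isMaxOn hWne hcont2.continuousOn
  have hsup1 : sSup ((fun x => ⟪θ, x⟫) '' W) = ⟪θ, y₁⟫ := by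
    apply IsGreatest.csSup_eq
    constructor
    · exact Set.mem_image_of_mem _ hy₁
    · rintro _ ⟨x, hx, rfl⟩
      exact hmax₁ hx
  have hsup2 : sSup ((fun x => ⟪-θ, x⟫) '' W) = ⟪-θ, y₂⟫ := by
    apply IsGreatest.csSup_eq
    constructor
    · exact Set.mem_image_of_mem _ hy₂
    · rintro _ ⟨x, hx, rfl⟩
      exact hmax₂ hx
  rw [hsup1, hsup2]
  have hkeymem : y₁ - w • θ ∈ W :=
    pal_key w hw W hWdist hcompl θ hθn y₁ hy₁ (fun x hx => hmax₁ hx)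
  have hlow : w - ⟪θ, y₁⟫ ≤ ⟪-θ, y₂⟫ := by
    have h : ⟪-θ, y₁ - w • θ⟫ ≤ ⟪-θ, y₂⟫ := hmax₂ hkeymem
    have e : ⟪-θ, y₁ - w • θ⟫ = w - ⟪θ, y₁⟫ := by
      rw [inner_neg_left, inner_sub_right, real_inner_smul_right,
        real_inner_self_eq_norm_sq, hθn]
      ring
    rw [e] at h
    linarith
  have hup : ⟪θ, y₁⟫ + ⟪-θ, y₂⟫ ≤ w := by
    have h1 : ⟪θ, y₁⟫ + ⟪-θ, y₂⟫ = ⟪θ, y₁ - y₂⟫ := by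
      rw [inner_neg_left, inner_sub_right]; ring
    have h2 : ⟪θ, y₁ - y₂⟫ ≤ ‖y₁ - y₂‖ := by
      have := real_inner_le_norm θ (y₁ - y₂)
      rwa [hθn, one_mul] at this
    have h3 : ‖y₁ - y₂‖ ≤ w := by
      have h := hWdist y₁ hy₁ y₂ hy₂; rwa [dist_eq_norm] at h
    linarith
  linarith
end
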